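/- arXiv:2506.15997 — 2 statements merged into one kernel-verified Lean document; each statement's English description precedes it below -/
import Mathlib

section
/- Let G be a connected bridgeless graph, v a vertex of G, and G' the graph obtained from G by adding two new vertices v', v'' together with the edges vv', v'v'', v''v (a pendant triangle at v). Then G' is connected and bridgeless, and the oriented strong diameter of G' is at least the oriented strong diameter of G. -/
open SimpleGraph

variable {V : Type*}

/-- A graph is bridgeless if no edge is a bridge. -/
def IsBridgeless (G : SimpleGraph V) : Prop := ∀ e : Sym2 V, ¬ G.IsBridge e

/-- `R` is an orientation of `G`: every arc of `R` is an edge of `G`, every edge of `G`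
receives exactly one direction. -/
def IsOrientation (G : SimpleGraph V) (R : V → V → Prop) : Prop :=
  (∀ u v, R u v → G.Adj u v) ∧ (∀ u v, G.Adj u v → (R u v ∨ R v u)) ∧
  (∀ u v, R u v → ¬ R v u)

/-- There is a directed walk of length `n` from `u` to `v` along the relation `R`. -/
def HasDirWalk (R : V → V → Prop) (u v : V) (n : ℕ) : Prop :=
  ∃ f : Fin (n + 1) → V, f 0 = u ∧ f (Fin.last n) = v ∧
    ∀ i : Fin n, R (f i.castSucc) (f i.succ)

/-- `R` is strongly connected. -/
def IsStrong (R : V → V → Prop) : Prop := ∀ u v : V, ∃ n, HasDirWalk R u v n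

/-- `R` is strongly connected within the vertex set `W`. -/
def IsStrongOn (R : V → V → Prop) (W : Set V) : Prop :=
  ∀ u ∈ W, ∀ v ∈ W, ∃ n, HasDirWalk R u v n

/-- Directed distance `∂(u,v)`: length of a shortest directed path from `u` to `v`. -/
noncomputable def ddist (R : V → V → Prop) (u v : V) : ℕ := sInf {n | HasDirWalk R u v n}

/-- `θ(u,v) = max{∂(u,v), ∂(v,u)}`. -/
noncomputable def theta (R : V → V → Prop) (u v : V) : ℕ := max (ddist R u v) (ddist R v u)

/-- The diameter of a (strong) orientation. -/
noncomputable def diamOr [Fintype V] (R : V → V → Prop) : ℕ :=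
  Finset.univ.sup fun p : V × V => theta R p.1 p.2

/-- The oriented diameter of `G`. -/
noncomputable def orientedDiam [Fintype V] (G : SimpleGraph V) : ℕ :=
  sInf {d | ∃ R : V → V → Prop, IsOrientation G R ∧ IsStrong R ∧ diamOr R = d}

/-- `A` is the arc set of a strongly connected subdigraph of `R` containing `u` and `v`. -/
def IsStrongSubOn (R : V → V → Prop) (u v : V) (A : Set (V × V)) : Prop :=
  (∀ p ∈ A, R p.1 p.2) ∧
  (∀ x ∈ insert u (insert v (Prod.fst '' A ∪ Prod.snd '' A)),
   ∀ y ∈ insert u (insert v (Prod.fst '' A ∪ Prod.snd '' A)),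
     Relation.ReflTransGen (fun a b => (a, b) ∈ A) x y)

/-- Strong distance `sd(u,v)`: minimum number of arcs of a strong subdigraph containing
`u` and `v`. -/
noncomputable def sdist (R : V → V → Prop) (u v : V) : ℕ :=
  sInf {n | ∃ A : Set (V × V), A.Finite ∧ A.ncard = n ∧ IsStrongSubOn R u v A}

/-- The strong diameter of a (strong) orientation. -/
noncomputable def sdiamOr [Fintype V] (R : V → V → Prop) : ℕ :=
  Finset.univ.sup fun p : V × V => sdist R p.1 p.2

/-- The oriented strong diameter of `G`. -/
noncomputable def orientedSDiam [Fintype V] (G : SimpleGraph V) : ℕ :=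
  sInf {d | ∃ R : V → V → Prop, IsOrientation G R ∧ IsStrong R ∧ sdiamOr R = d}

/-- `D` is a dominating set of `G`. -/
def IsDominating (G : SimpleGraph V) (D : Set V) : Prop :=
  ∀ v ∉ D, ∃ u ∈ D, G.Adj u v

/-- The domination number of `G`. -/
noncomputable def dominationNumber [Fintype V] (G : SimpleGraph V) : ℕ :=
  sInf {n | ∃ D : Set V, D.ncard = n ∧ IsDominating G D}

/-- `v` is associated with an isolated triangle. -/
def HasIsolatedTriangle (G : SimpleGraph V) (v : V) : Prop :=
  ∃ v₁ v₂ : V, G.Adj v v₁ ∧ G.Adj v₁ v₂ ∧ G.Adj v₂ v ∧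
    (G.neighborSet v₁).ncard = 2 ∧ (G.neighborSet v₂).ncard = 2

/-- `(G, D)` is a standard pair. -/
def IsStandardPair (G : SimpleGraph V) (D : Set V) : Prop :=
  IsBridgeless G ∧
  (∀ u ∈ D, ∀ v ∈ D, ¬ G.Adj u v) ∧
  (∀ v ∉ D, ∃! u, u ∈ D ∧ G.Adj u v) ∧
  (∀ v ∈ D, HasIsolatedTriangle G v)

/-- `H` is an alternative subgraph of `G` with respect to the dominating set `D`. -/
def IsAlternative (G : SimpleGraph V) (D : Set V) (H : G.Subgraph) : Prop :=
  IsBridgeless H.coe ∧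
  (H.verts ∩ D).Nonempty ∧
  (∀ x ∈ H.verts ∩ D, ∃ a b : V, a ≠ b ∧ a ∉ D ∧ b ∉ D ∧ H.Adj x a ∧ H.Adj x b ∧
    ∀ c, c ∉ D → H.Adj x c → c = a ∨ c = b) ∧
  (∀ y ∈ H.verts, y ∉ D → ∃ x ∈ H.verts ∩ D, H.Adj x y)

/-- `d_i(H⃗)`: maximum of `θ(u,v)` over pairs `u, v ∈ W` with `|{u,v} ∩ D| = i`. -/
noncomputable def dPairs (R : V → V → Prop) (W D : Set V) (i : ℕ) : ℕ :=
  sSup {k | ∃ u ∈ W, ∃ v ∈ W, ({u, v} ∩ D).ncard = i ∧ theta R u v = k}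

/-- `m(H⃗) = max{d₀ − 2, d₁ − 1, d₂}`. -/
noncomputable def mOf (R : V → V → Prop) (W D : Set V) : ℕ :=
  max (dPairs R W D 0 - 2) (max (dPairs R W D 1 - 1) (dPairs R W D 2))

/-- The graph obtained from `G` by subdividing the edge `uv` with a new vertex `none`. -/
def subdivide (G : SimpleGraph V) (u v : V) : SimpleGraph (Option V) :=
  SimpleGraph.fromRel fun a b =>
    match a, b with
    | some x, some y => G.Adj x y ∧ ¬(x = u ∧ y = v) ∧ ¬(x = v ∧ y = u)
    | some x, none => x = u ∨ x = v
    | none, _ => False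

/-- The graph obtained from `G` by attaching a pendant triangle at `v`. -/
def pendantTriangle (G : SimpleGraph V) (v : V) : SimpleGraph (V ⊕ Fin 2) :=
  SimpleGraph.fromRel fun a b =>
    match a, b with
    | Sum.inl x, Sum.inl y => G.Adj x y
    | Sum.inl x, Sum.inr _ => x = v
    | Sum.inr _, Sum.inl _ => False
    | Sum.inr i, Sum.inr j => i ≠ j

/-- `G` has a Hamiltonian path with endpoints `u` and `v`. -/
def HasHamiltonianPathBetween (G : SimpleGraph V) (u v : V) : Prop :=
  ∃ p : G.Walk u v, p.IsPath ∧ ∀ w : V, w ∈ p.support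

/-!
Contracting the pendant triangle onto `v` sends every arc of an orientation of the enlarged
graph either to an arc between old vertices or to a loop at `v`. So a strong orientation of the
enlarged graph restricts to a strong orientation of `G`, and a strong subdigraph through two
old vertices restricts to one with no more arcs: strong distances between old vertices do not
grow. Conversely, orienting the triangle as a directed 3-cycle extends every strong orientation
of `G`, so both infima are over nonempty sets at the same time.
-/

section DirectedWalks

variable {α : Type*} {R : α → α → Prop}

lemma hasDirWalk_zero {u v : α} : HasDirWalk R u v 0 ↔ u = v :=
  ⟨fun ⟨_, h0, hl, _⟩ => h0.symm.trans hl, fun h => ⟨fun _ => u, rfl, h, Fin.elim0⟩⟩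

lemma hasDirWalk_succ {u w : α} {n : ℕ} :
    HasDirWalk R u w (n + 1) ↔ ∃ v, R u v ∧ HasDirWalk R v w n := by
  constructor
  · rintro ⟨f, h0, hl, hf⟩
    exact ⟨f 1, h0 ▸ hf 0, f ∘ Fin.succ, rfl, hl, fun i => hf i.succ⟩
  · rintro ⟨v, huv, f, h0, hl, hf⟩
    refine ⟨Fin.cons u f, rfl, hl, fun i => ?_⟩
    cases i using Fin.cases with
    | zero => simpa [h0] using huv
    | succ i => simpa [← Fin.succ_castSucc] using hf i

lemma exists_hasDirWalk_iff_reflTransGen {u v : α} :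
    (∃ n, HasDirWalk R u v n) ↔ Relation.ReflTransGen R u v := by
  constructor
  · rintro ⟨n, hn⟩
    induction n generalizing u with
    | zero => exact hasDirWalk_zero.mp hn ▸ .refl
    | succ n ih =>
      obtain ⟨w, huw, hw⟩ := hasDirWalk_succ.mp hn
      exact .head huw (ih hw)
  · intro h
    induction h using Relation.ReflTransGen.head_induction_on with
    | refl => exact ⟨0, hasDirWalk_zero.mpr rfl⟩
    | head huw _ ih =>
      obtain ⟨n, hn⟩ := ih
      exact ⟨n + 1, hasDirWalk_succ.mpr ⟨_, huw, hn⟩⟩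

lemma isStrong_iff_reflTransGen : IsStrong R ↔ ∀ u v, Relation.ReflTransGen R u v :=
  forall₂_congr fun _ _ => exists_hasDirWalk_iff_reflTransGen

lemma exists_isStrongSubOn_ncard_eq_sdist [Finite α] (hR : IsStrong R) (u v : α) :
    ∃ A, A.Finite ∧ A.ncard = sdist R u v ∧ IsStrongSubOn R u v A := by
  have hne : {n | ∃ A, A.Finite ∧ A.ncard = n ∧ IsStrongSubOn R u v A}.Nonempty :=
    ⟨_, {p | R p.1 p.2}, Set.toFinite _, rfl, fun _ hp => hp,
      fun x _ y _ => isStrong_iff_reflTransGen.mp hR x y⟩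
  exact Nat.sInf_mem hne

end DirectedWalks

lemma Nat.sInf_le_sInf_of_forall_exists_le {S T : Set ℕ} (hST : ∀ t ∈ T, ∃ s ∈ S, s ≤ t)
    (hne : S.Nonempty → T.Nonempty) : sInf S ≤ sInf T := by
  rcases T.eq_empty_or_nonempty with rfl | hT
  · rw [Set.not_nonempty_iff_eq_empty.mp (mt hne Set.not_nonempty_empty)]
  · obtain ⟨s, hs, hle⟩ := hST _ (Nat.sInf_mem hT)
    exact (Nat.sInf_le hs).trans hle

-- Mathlib's `IsBridge s(u, w)` also holds when `u` and `w` are not reachable at all.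
lemma IsBridgeless.preconnected {G : SimpleGraph V} (hG : IsBridgeless G) : G.Preconnected :=
  fun u w => (not_not.mp (hG s(u, w))).mono (deleteEdges_le _)

lemma not_isBridge_of_not_adj {G : SimpleGraph V} {u w : V} (huw : G.Reachable u w)
    (hadj : ¬ G.Adj u w) : ¬ G.IsBridge s(u, w) := by
  rwa [isBridge_iff, not_not, deleteEdges_eq_self.mpr (by simpa using hadj)]

lemma not_isBridge_of_mem_edges {G : SimpleGraph V} {e : Sym2 V} {u : V} {c : G.Walk u u}
    (hc : c.IsCycle) (he : e ∈ c.edges) : ¬ G.IsBridge e :=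
  fun hb => hb.notMem_edges_of_isCycle hc he

open Function

namespace pendantTriangle

variable (G : SimpleGraph V) (v : V)

@[simp]
lemma adj_inl_inl {x y : V} : (pendantTriangle G v).Adj (.inl x) (.inl y) ↔ G.Adj x y := by
  simp only [pendantTriangle, fromRel_adj, ne_eq, Sum.inl.injEq]
  exact ⟨fun h => h.2.elim id fun h => h.symm, fun h => ⟨h.ne, .inl h⟩⟩

@[simp]
lemma adj_inl_inr {x : V} {i : Fin 2} : (pendantTriangle G v).Adj (.inl x) (.inr i) ↔ x = v := by
  simp [pendantTriangle]

@[simp]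
lemma adj_inr_inl {x : V} {i : Fin 2} : (pendantTriangle G v).Adj (.inr i) (.inl x) ↔ x = v := by
  simp [pendantTriangle]

@[simp]
lemma adj_inr_inr {i j : Fin 2} : (pendantTriangle G v).Adj (.inr i) (.inr j) ↔ i ≠ j := by
  simp [pendantTriangle, eq_comm (a := j)]

def inlHom : G →g pendantTriangle G v := ⟨Sum.inl, (adj_inl_inl G v).mpr⟩

lemma reachable_inl (hG : G.Preconnected) : ∀ a, (pendantTriangle G v).Reachable a (.inl v)
  | .inl x => (hG x v).map (inlHom G v)
  | .inr _ => ((adj_inr_inl G v).mpr rfl).reachable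

lemma connected (hG : G.Preconnected) : (pendantTriangle G v).Connected :=
  (connected_iff_exists_forall_reachable _).mpr ⟨.inl v, fun a => (reachable_inl G v hG a).symm⟩

def triangle : (pendantTriangle G v).Walk (.inl v) (.inl v) :=
  .cons ((adj_inl_inr G v).mpr rfl) <| .cons ((adj_inr_inr G v).mpr zero_ne_one) <|
    .cons ((adj_inr_inl G v).mpr rfl) .nil

lemma triangle_isCycle : (triangle G v).IsCycle := by
  simp [triangle, Walk.isCycle_def]

lemma mem_edges_triangle {a b : V ⊕ Fin 2} (hab : (pendantTriangle G v).Adj a b)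
    (hright : a.isRight ∨ b.isRight) : s(a, b) ∈ (triangle G v).edges := by
  rcases a with x | i <;> rcases b with y | j
  · simp at hright
  · obtain rfl := (adj_inl_inr G v).mp hab
    fin_cases j <;> simp [triangle]
  · obtain rfl := (adj_inr_inl G v).mp hab
    fin_cases i <;> simp [triangle]
  · fin_cases i <;> fin_cases j <;> simp_all [triangle]

theorem isBridgeless (hG : IsBridgeless G) : IsBridgeless (pendantTriangle G v) := by
  intro e
  induction e with | h a b
  by_cases hab : (pendantTriangle G v).Adj a b
  · rcases a with x | i <;> rcases b with y | j
    · obtain ⟨u, c, hc, he⟩ := adj_and_reachable_delete_edges_iff_exists_cycle.mp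
        ⟨(adj_inl_inl G v).mp hab, not_not.mp (hG s(x, y))⟩
      refine not_isBridge_of_mem_edges (hc.map (f := inlHom G v) Sum.inl_injective) ?_
      rw [Walk.edges_map]
      exact List.mem_map_of_mem he
    all_goals
      exact not_isBridge_of_mem_edges (triangle_isCycle G v)
        (mem_edges_triangle G v hab (by simp))
  · exact not_isBridge_of_not_adj ((connected G v hG.preconnected).preconnected a b) hab

def collapse : V ⊕ Fin 2 → V := Sum.elim id fun _ => v

def extend (R : V → V → Prop) : V ⊕ Fin 2 → V ⊕ Fin 2 → Prop
  | .inl x, .inl y => R x y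
  | .inl x, .inr i => x = v ∧ i = 0
  | .inr i, .inr j => i = 0 ∧ j = 1
  | .inr i, .inl y => y = v ∧ i = 1

variable {G v} {R : V → V → Prop} {R' S : V ⊕ Fin 2 → V ⊕ Fin 2 → Prop}

lemma reflGen_collapse (hS : ∀ a b, S a b → (pendantTriangle G v).Adj a b) {a b : V ⊕ Fin 2}
    (hab : S a b) : Relation.ReflGen (S on Sum.inl) (collapse v a) (collapse v b) := by
  rcases a with x | i <;> rcases b with y | j
  · exact .single hab
  · obtain rfl := (adj_inl_inr G v).mp (hS _ _ hab)
    exact .refl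
  · obtain rfl := (adj_inr_inl G v).mp (hS _ _ hab)
    exact .refl
  · exact .refl

lemma reflTransGen_collapse (hS : ∀ a b, S a b → (pendantTriangle G v).Adj a b)
    {a b : V ⊕ Fin 2} (hab : Relation.ReflTransGen S a b) :
    Relation.ReflTransGen (S on Sum.inl) (collapse v a) (collapse v b) :=
  hab.lift' (collapse v) fun _ _ h => (reflGen_collapse hS h).to_reflTransGen

lemma isOrientation_restrict (hR' : IsOrientation (pendantTriangle G v) R') :
    IsOrientation G (R' on Sum.inl) :=
  ⟨fun _ _ h => (adj_inl_inl G v).mp (hR'.1 _ _ h),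
    fun _ _ h => hR'.2.1 _ _ ((adj_inl_inl G v).mpr h), fun _ _ => hR'.2.2 _ _⟩

lemma isStrong_restrict (hR' : IsOrientation (pendantTriangle G v) R') (hs : IsStrong R') :
    IsStrong (R' on Sum.inl) :=
  isStrong_iff_reflTransGen.mpr fun x y =>
    reflTransGen_collapse hR'.1 (isStrong_iff_reflTransGen.mp hs (.inl x) (.inl y))

lemma isStrongSubOn_restrict (hR' : ∀ a b, R' a b → (pendantTriangle G v).Adj a b) {u w : V}
    {A : Set ((V ⊕ Fin 2) × (V ⊕ Fin 2))} (hA : IsStrongSubOn R' (.inl u) (.inl w) A) :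
    IsStrongSubOn (R' on Sum.inl) u w (Prod.map Sum.inl Sum.inl ⁻¹' A) := by
  refine ⟨fun _ hp => hA.1 _ hp, fun x hx y hy => ?_⟩
  have hmem : ∀ z ∈ insert u (insert w (Prod.fst '' (Prod.map Sum.inl Sum.inl ⁻¹' A) ∪
      Prod.snd '' (Prod.map Sum.inl Sum.inl ⁻¹' A))), (.inl z : V ⊕ Fin 2) ∈
        insert (.inl u) (insert (.inl w) (Prod.fst '' A ∪ Prod.snd '' A)) := by
    rintro z (rfl | rfl | ⟨p, hp, rfl⟩ | ⟨p, hp, rfl⟩)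
    · exact .inl rfl
    · exact .inr (.inl rfl)
    · exact .inr (.inr (.inl ⟨_, hp, rfl⟩))
    · exact .inr (.inr (.inr ⟨_, hp, rfl⟩))
  exact reflTransGen_collapse (fun a b hab => hR' a b (hA.1 _ hab))
    (hA.2 _ (hmem x hx) _ (hmem y hy))

lemma sdist_restrict_le [Finite V] (hR' : IsOrientation (pendantTriangle G v) R')
    (hs : IsStrong R') (u w : V) : sdist (R' on Sum.inl) u w ≤ sdist R' (.inl u) (.inl w) := by
  obtain ⟨A, hfin, hcard, hA⟩ := exists_isStrongSubOn_ncard_eq_sdist hs (.inl u) (.inl w)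
  have hinj : (Prod.map Sum.inl Sum.inl : V × V → (V ⊕ Fin 2) × (V ⊕ Fin 2)).Injective :=
    Sum.inl_injective.prodMap Sum.inl_injective
  calc sdist (R' on Sum.inl) u w ≤ (Prod.map Sum.inl Sum.inl ⁻¹' A).ncard :=
        Nat.sInf_le ⟨_, hfin.preimage hinj.injOn, rfl, isStrongSubOn_restrict hR'.1 hA⟩
    _ ≤ A.ncard := Set.ncard_le_ncard_of_injOn _ (fun _ hp => hp) hinj.injOn hfin
    _ = sdist R' (.inl u) (.inl w) := hcard

lemma sdiamOr_restrict_le [Fintype V] (hR' : IsOrientation (pendantTriangle G v) R')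
    (hs : IsStrong R') : sdiamOr (R' on Sum.inl) ≤ sdiamOr R' :=
  Finset.sup_le fun p _ => (sdist_restrict_le hR' hs p.1 p.2).trans <|
    Finset.le_sup (f := fun q : (V ⊕ Fin 2) × (V ⊕ Fin 2) => sdist R' q.1 q.2)
      (Finset.mem_univ (.inl p.1, .inl p.2))

lemma isOrientation_extend (hR : IsOrientation G R) :
    IsOrientation (pendantTriangle G v) (extend v R) := by
  refine ⟨?_, ?_, ?_⟩
  · rintro (x | i) (y | j) h
    · exact (adj_inl_inl G v).mpr (hR.1 x y h)
    all_goals simp_all [extend]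
  · rintro (x | i) (y | j) h
    · exact hR.2.1 x y ((adj_inl_inl G v).mp h)
    all_goals simp only [adj_inl_inr, adj_inr_inl, adj_inr_inr] at h
    all_goals simp only [extend, h, true_and]
    all_goals omega
  · rintro (x | i) (y | j) h
    · exact hR.2.2 x y h
    all_goals simp_all [extend]

lemma isStrong_extend (hR : IsStrong R) : IsStrong (extend v R) := by
  rw [isStrong_iff_reflTransGen] at hR ⊢
  have hlift (x y : V) : Relation.ReflTransGen (extend v R) (.inl x) (.inl y) :=
    (hR x y).lift Sum.inl fun _ _ h => h
  have h0 : extend v R (.inl v) (.inr 0) := ⟨rfl, rfl⟩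
  have h01 : extend v R (.inr 0) (.inr 1) := ⟨rfl, rfl⟩
  have h1 : extend v R (.inr 1) (.inl v) := ⟨rfl, rfl⟩
  have hto : ∀ a, Relation.ReflTransGen (extend v R) a (.inl v)
    | .inl x => hlift x v
    | .inr 0 => .head h01 (.single h1)
    | .inr 1 => .single h1
  have hfrom : ∀ a, Relation.ReflTransGen (extend v R) (.inl v) a
    | .inl y => hlift v y
    | .inr 0 => .single h0
    | .inr 1 => .tail (.single h0) h01
  exact fun a b => (hto a).trans (hfrom b)

variable (G v)

theorem orientedSDiam_le [Fintype V] : orientedSDiam G ≤ orientedSDiam (pendantTriangle G v) :=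
  Nat.sInf_le_sInf_of_forall_exists_le
    (fun _ ⟨_, hR', hs, hd⟩ =>
      ⟨_, ⟨_, isOrientation_restrict hR', isStrong_restrict hR' hs, rfl⟩,
        hd ▸ sdiamOr_restrict_le hR' hs⟩)
    (fun ⟨_, _, hR, hs, _⟩ => ⟨_, _, isOrientation_extend hR, isStrong_extend (v := v) hs, rfl⟩)

end pendantTriangle

theorem pendantTriangle_oriented_sdiam_ge_general {V : Type*} [Fintype V]
    (G : SimpleGraph V) (v : V)
    (hbridgeless : IsBridgeless G) :
    (pendantTriangle G v).Connected ∧ IsBridgeless (pendantTriangle G v) ∧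
      orientedSDiam G ≤ orientedSDiam (pendantTriangle G v) :=
  ⟨pendantTriangle.connected G v hbridgeless.preconnected,
    pendantTriangle.isBridgeless G v hbridgeless, pendantTriangle.orientedSDiam_le G v⟩

/-- Attaching a pendant triangle at a vertex of a connected bridgeless graph
keeps it connected and bridgeless and does not decrease the oriented strong diameter. -/
theorem pendantTriangle_oriented_sdiam_ge {V : Type*} [Fintype V]
    (G : SimpleGraph V) (v : V)
    (hconn : G.Connected) (hbridgeless : IsBridgeless G) :
    (pendantTriangle G v).Connected ∧ IsBridgeless (pendantTriangle G v) ∧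
      orientedSDiam G ≤ orientedSDiam (pendantTriangle G v) :=
  pendantTriangle_oriented_sdiam_ge_general G v hbridgeless
end

section
/- Let (G,D) be a standard pair and let H₀ be an alternative subgraph of G with r₀ = |V(H₀) ∩ D| dominating vertices. Then |V(H₀)| = 3r₀, every dominating vertex of H₀ has degree exactly 2 in H₀, and any strong orientation H⃗₀ of H₀ satisfies diam(H⃗₀) ≤ 3r₀ − 1. -/
open SimpleGraph

variable {V : Type*}

/-!
Each dominating vertex of `H₀` has exactly two neighbours in `H₀`, both dominated because `D` is
independent, and these neighbourhoods partition the dominated vertices of `H₀` because every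
dominated vertex has a unique dominator; hence `|V(H₀)| = r₀ + 2r₀`. A shortest directed walk
repeats no vertex, so it has fewer than `|V(H₀)|` arcs.
-/

section DirectedWalks

variable {R : V → V → Prop}

lemma hasDirWalk_zero_iff {u v : V} : HasDirWalk R u v 0 ↔ u = v := by
  exact ⟨fun ⟨f, hf0, hfl, _⟩ => hf0.symm.trans hfl, fun h => ⟨fun _ => u, rfl, h, nofun⟩⟩

lemma hasDirWalk_succ_iff {u v : V} {n : ℕ} :
    HasDirWalk R u v (n + 1) ↔ ∃ w, R u w ∧ HasDirWalk R w v n := by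
  constructor
  · rintro ⟨f, hf0, hfl, hf⟩
    refine ⟨f 1, hf0 ▸ hf 0, fun i => f i.succ, rfl, hfl, fun i => ?_⟩
    simpa only [Fin.succ_castSucc] using hf i.succ
  · rintro ⟨w, huw, f, hf0, hfl, hf⟩
    refine ⟨Fin.cons u f, rfl, hfl, fun i => ?_⟩
    cases i using Fin.cases with
    | zero => simpa [hf0] using huw
    | succ i => simpa [← Fin.succ_castSucc] using hf i

lemma HasDirWalk.append {u w v : V} {a b : ℕ} (h₁ : HasDirWalk R u w a)
    (h₂ : HasDirWalk R w v b) : HasDirWalk R u v (a + b) := by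
  induction a generalizing u with
  | zero => rwa [hasDirWalk_zero_iff.1 h₁, Nat.zero_add]
  | succ a ih =>
    obtain ⟨x, hux, hxw⟩ := hasDirWalk_succ_iff.1 h₁
    rw [Nat.add_right_comm]
    exact hasDirWalk_succ_iff.2 ⟨x, hux, ih hxw⟩

lemma hasDirWalk_segment {n : ℕ} {f : Fin (n + 1) → V}
    (hf : ∀ i : Fin n, R (f i.castSucc) (f i.succ)) {i j : Fin (n + 1)} (hij : i ≤ j) :
    HasDirWalk R (f i) (f j) (j - i) := by
  refine ⟨fun k => f ⟨i + k, by omega⟩, rfl, ?_, fun k => ?_⟩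
  · exact congrArg f (Fin.ext (by simp; omega))
  · convert hf ⟨i + k, by omega⟩ using 2 <;> ext <;> simp; omega

lemma injective_of_hasDirWalk_ddist {u v : V} {f : Fin (ddist R u v + 1) → V}
    (hf0 : f 0 = u) (hfl : f (Fin.last _) = v)
    (hf : ∀ i : Fin (ddist R u v), R (f i.castSucc) (f i.succ)) : Function.Injective f := by
  intro i j hij
  by_contra hne
  wlog hlt : i < j generalizing i j
  · exact this hij.symm (Ne.symm hne) (lt_of_le_of_ne (not_lt.1 hlt) (Ne.symm hne))
  -- skip the closed subwalk between positions `i` and `j`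
  have hshort : HasDirWalk R u v (i + (ddist R u v - j)) := by
    have := (hasDirWalk_segment hf (Fin.zero_le i)).append
      (hij ▸ hasDirWalk_segment hf (Fin.le_last j))
    simpa [hf0, hfl] using this
  have : ddist R u v ≤ i + (ddist R u v - j) := Nat.sInf_le hshort
  omega

lemma ddist_lt_ncard {W : Set V} (hW : W.Finite) (hRW : ∀ a b, R a b → b ∈ W) {u v : V}
    (hu : u ∈ W) (huv : ∃ n, HasDirWalk R u v n) : ddist R u v < W.ncard := by
  obtain ⟨f, hf0, hfl, hf⟩ : HasDirWalk R u v (ddist R u v) := Nat.sInf_mem huv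
  have hfW : Set.range f ⊆ W := by
    rintro _ ⟨i, rfl⟩
    cases i using Fin.cases with
    | zero => rwa [hf0]
    | succ i => exact hRW _ _ (hf i)
  have := Set.ncard_le_ncard hfW hW
  rw [Set.ncard_range_of_injective (injective_of_hasDirWalk_ddist hf0 hfl hf),
    Nat.card_eq_fintype_card, Fintype.card_fin] at this
  omega

lemma theta_lt_ncard {W : Set V} (hW : W.Finite) (hRW : ∀ a b, R a b → b ∈ W) {u v : V}
    (hu : u ∈ W) (hv : v ∈ W) (huv : ∃ n, HasDirWalk R u v n)
    (hvu : ∃ n, HasDirWalk R v u n) : theta R u v < W.ncard :=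
  max_lt (ddist_lt_ncard hW hRW hu huv) (ddist_lt_ncard hW hRW hv hvu)

end DirectedWalks

lemma Set.ncard_biUnion_of_ncard_eq {ι α : Type*} {s : Set ι} (hs : s.Finite) {t : ι → Set α}
    (ht : ∀ i ∈ s, (t i).Finite) (hdisj : s.PairwiseDisjoint t) {k : ℕ}
    (hk : ∀ i ∈ s, (t i).ncard = k) : (⋃ i ∈ s, t i).ncard = k * s.ncard := by
  rw [hs.ncard_biUnion ht hdisj, finsum_mem_congr rfl hk,
    finsum_mem_eq_finite_toFinset_sum _ hs, Finset.sum_const, smul_eq_mul,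
    Set.ncard_eq_toFinset_card _ hs, mul_comm]

section Alternative

variable {G : SimpleGraph V} {D : Set V}

lemma SimpleGraph.IsIndepSet.notMem_of_adj (hD : G.IsIndepSet D) {x y : V} (hx : x ∈ D)
    (hxy : G.Adj x y) : y ∉ D :=
  fun hy => hD hx hy hxy.ne hxy

lemma pairwiseDisjoint_neighborSet_of_existsUnique (hD : G.IsIndepSet D)
    (huniq : ∀ v ∉ D, ∃! u, u ∈ D ∧ G.Adj u v) : D.PairwiseDisjoint G.neighborSet := by
  intro x hx x' hx' hne
  refine Set.disjoint_left.2 fun y hxy hx'y => hne ?_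
  exact (huniq y (hD.notMem_of_adj hx hxy)).unique ⟨hx, hxy⟩ ⟨hx', hx'y⟩

variable {H : G.Subgraph}

lemma IsAlternative.neighborSet_eq_pair (hD : G.IsIndepSet D) (halt : IsAlternative G D H)
    {x : V} (hx : x ∈ H.verts ∩ D) : ∃ a b, a ≠ b ∧ H.neighborSet x = {a, b} := by
  obtain ⟨a, b, hab, -, -, hxa, hxb, honly⟩ := halt.2.2.1 x hx
  refine ⟨a, b, hab, Set.Subset.antisymm (fun c hxc => honly c ?_ hxc) ?_⟩
  · exact hD.notMem_of_adj hx.2 (H.adj_sub hxc)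
  · rintro c (rfl | rfl) <;> assumption

lemma IsAlternative.ncard_neighborSet (hD : G.IsIndepSet D) (halt : IsAlternative G D H)
    {x : V} (hx : x ∈ H.verts ∩ D) : (H.neighborSet x).ncard = 2 := by
  obtain ⟨a, b, hab, hxab⟩ := halt.neighborSet_eq_pair hD hx
  rw [hxab, Set.ncard_pair hab]

lemma IsAlternative.biUnion_neighborSet (hD : G.IsIndepSet D) (halt : IsAlternative G D H) :
    ⋃ x ∈ H.verts ∩ D, H.neighborSet x = H.verts \ D := by
  ext y
  simp only [Set.mem_iUnion, Subgraph.mem_neighborSet, exists_prop, Set.mem_sdiff]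
  constructor
  · rintro ⟨x, hx, hxy⟩
    exact ⟨hxy.snd_mem, hD.notMem_of_adj hx.2 (H.adj_sub hxy)⟩
  · rintro ⟨hy, hyD⟩
    exact halt.2.2.2 y hy hyD

lemma IsAlternative.ncard_verts [Finite V] (hD : G.IsIndepSet D)
    (huniq : ∀ v ∉ D, ∃! u, u ∈ D ∧ G.Adj u v) (halt : IsAlternative G D H) :
    H.verts.ncard = 3 * (H.verts ∩ D).ncard := by
  have hdisj : (H.verts ∩ D).PairwiseDisjoint H.neighborSet :=
    ((pairwiseDisjoint_neighborSet_of_existsUnique hD huniq).subset Set.inter_subset_right).mono_on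
      fun x _ => H.neighborSet_subset x
  have hdominated : (H.verts \ D).ncard = 2 * (H.verts ∩ D).ncard := by
    rw [← halt.biUnion_neighborSet hD]
    exact Set.ncard_biUnion_of_ncard_eq (Set.toFinite _) (fun _ _ => Set.toFinite _) hdisj
      fun x hx => halt.ncard_neighborSet hD hx
  rw [← Set.ncard_inter_add_ncard_sdiff_eq_ncard H.verts D, hdominated]
  ring

end Alternative

/-- An alternative subgraph `H₀` of a standard pair `(G, D)` with
`r₀ = |V(H₀) ∩ D|` has exactly `3r₀` vertices, each dominating vertex has degree exactly
2 in `H₀`, and any strong orientation of `H₀` has diameter at most `3r₀ - 1`. -/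
theorem alternative_basic_properties {V : Type*} [Fintype V]
    (G : SimpleGraph V) (D : Set V) (hstd : IsStandardPair G D)
    (H₀ : G.Subgraph) (halt : IsAlternative G D H₀)
    (r₀ : ℕ) (hr₀ : (H₀.verts ∩ D).ncard = r₀) :
    H₀.verts.ncard = 3 * r₀ ∧
    (∀ x ∈ H₀.verts ∩ D, (H₀.neighborSet x).ncard = 2) ∧
    (∀ R : V → V → Prop, IsOrientation H₀.spanningCoe R → IsStrongOn R H₀.verts →
      ∀ u ∈ H₀.verts, ∀ v ∈ H₀.verts, theta R u v ≤ 3 * r₀ - 1) := by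
  obtain ⟨-, hindep, huniq, -⟩ := hstd
  have hD : G.IsIndepSet D := fun u hu v hv _ => hindep u hu v hv
  have hcard := halt.ncard_verts hD huniq
  subst hr₀
  refine ⟨hcard, fun x hx => halt.ncard_neighborSet hD hx, fun R hR hstrong u hu v hv => ?_⟩
  have := theta_lt_ncard (Set.toFinite H₀.verts) (fun a b hab => (hR.1 a b hab).snd_mem) hu hv
    (hstrong u hu v hv) (hstrong v hv u hu)
  omega
end
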